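/- Redundant built-in constraints can be removed while preserving computations: if CT ⊨ ∀(D → C) and (H ∧ C ∧ D ∧ G) ↦* S, then (H ∧ D ∧ G) ↦* S, where H, G are goals, C, D are built-in constraints, and ↦* is the reflexive-transitive closure of the CHR transition relation. -/

import Mathlib

/-- Built-in constraints are modelled semantically as predicates on valuations `V`
(models of the constraint theory CT); a built-in store is a set of such constraints, with
conjunctive meaning. -/
def Meaning {V : Type*} (S : Set (V → Prop)) : V → Prop := fun v => ∀ c ∈ S, c v

/-- A CHR rule: its applicability condition depends on the built-in store only through its
CT-meaning (so CT-equivalent stores enable the same rule applications); applying the rule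
replaces the matched user constraints by the body user constraints and adds the body
built-ins. -/
structure CHRRule (U V : Type*) where
  appl : (V → Prop) → Multiset U → Prop
  appl_congr : ∀ ⦃b b' : V → Prop⦄ ⦃h : Multiset U⦄,
    (∀ v, b v ↔ b' v) → appl b h → appl b' h
  bodyUd : Multiset U → Multiset U
  bodyBi : Multiset U → Set (V → Prop)

/-- One CHR transition step of program `P` on states (user multiset, built-in store). -/
def CHRStep {U V : Type*} [DecidableEq U] (P : Set (CHRRule U V))
    (s t : Multiset U × Set (V → Prop)) : Prop :=
  ∃ r ∈ P, ∃ h : Multiset U, h ≤ s.1 ∧ r.appl (Meaning s.2) h ∧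
    t = (s.1 - h + r.bodyUd h, s.2 ∪ r.bodyBi h)

/-! Rule applicability sees a store only through its meaning, so a computation can be replayed
step by step from any store with the same meaning; and since `D` entails `C`, the stores
`{C, D} ∪ G` and `{D} ∪ G` have the same meaning. -/

theorem meaning_insert {V : Type*} (c : V → Prop) (S : Set (V → Prop)) (v : V) :
    Meaning (insert c S) v ↔ c v ∧ Meaning S v :=
  Set.forall_mem_insert

theorem meaning_insert_of_imp {V : Type*} {c : V → Prop} {S : Set (V → Prop)}
    (h : ∀ v, Meaning S v → c v) (v : V) : Meaning (insert c S) v ↔ Meaning S v := by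
  rw [meaning_insert]
  exact ⟨And.right, fun hS => ⟨h v hS, hS⟩⟩

theorem meaning_union {V : Type*} (S T : Set (V → Prop)) (v : V) :
    Meaning (S ∪ T) v ↔ Meaning S v ∧ Meaning T v := by
  simp only [Meaning, Set.mem_union, or_imp, forall_and]

namespace CHRStep

variable {U V : Type*} [DecidableEq U] {P : Set (CHRRule U V)}

theorem exists_of_meaning_iff {s t : Multiset U × Set (V → Prop)} (hst : CHRStep P s t)
    {B : Set (V → Prop)} (hB : ∀ v, Meaning B v ↔ Meaning s.2 v) :
    ∃ B' : Set (V → Prop), CHRStep P (s.1, B) (t.1, B') ∧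
      ∀ v, Meaning B' v ↔ Meaning t.2 v := by
  obtain ⟨r, hrP, h, hle, happl, rfl⟩ := hst
  refine ⟨B ∪ r.bodyBi h, ⟨r, hrP, h, hle, r.appl_congr (fun v => (hB v).symm) happl, rfl⟩,
    fun v => ?_⟩
  rw [meaning_union, meaning_union, hB]

theorem reflTransGen_of_meaning_iff {s t : Multiset U × Set (V → Prop)}
    (hst : Relation.ReflTransGen (CHRStep P) s t)
    {B : Set (V → Prop)} (hB : ∀ v, Meaning B v ↔ Meaning s.2 v) :
    ∃ B' : Set (V → Prop), Relation.ReflTransGen (CHRStep P) (s.1, B) (t.1, B') ∧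
      ∀ v, Meaning B' v ↔ Meaning t.2 v := by
  induction hst with
  | refl => exact ⟨B, .refl, hB⟩
  | tail _ hstep ih =>
    obtain ⟨B', hreach, hB'⟩ := ih
    obtain ⟨B'', hstep', hB''⟩ := hstep.exists_of_meaning_iff hB'
    exact ⟨B'', hreach.tail hstep', hB''⟩

end CHRStep

/-- Redundant built-in constraints can be removed while preserving
computations: if CT ⊨ ∀(D → C) and (H ∧ C ∧ D ∧ G) ↦* S, then (H ∧ D ∧ G) ↦* S
(resulting states compared up to CT-equivalence of their built-in constraints). -/
theorem remove_redundant_builtins {U V : Type*} [DecidableEq U]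
    (P : Set (CHRRule U V))
    (Hud Gud : Multiset U) (C D : V → Prop) (Gbi : Set (V → Prop))
    (hDC : ∀ v, D v → C v)
    (S : Multiset U × Set (V → Prop))
    (hcomp : Relation.ReflTransGen (CHRStep P)
      (Hud + Gud, insert C (insert D Gbi)) S) :
    ∃ Sbi' : Set (V → Prop),
      Relation.ReflTransGen (CHRStep P) (Hud + Gud, insert D Gbi) (S.1, Sbi') ∧
      ∀ v, Meaning Sbi' v ↔ Meaning S.2 v := by
  have hC : ∀ v, Meaning (insert D Gbi) v → C v := fun v hD =>
    hDC v ((meaning_insert D Gbi v).mp hD).1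
  exact CHRStep.reflTransGen_of_meaning_iff hcomp fun v => (meaning_insert_of_imp hC v).symm
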